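/- arXiv:1406.2370 — 2 statements merged into one kernel-verified Lean document; each statement's English description precedes it below -/
import Mathlib

section
/- In any of the four linear substitution calculi (Name, Value-LR, Value-RL, Need), if t (⊸ₘ ∪ ⊸ₑ ∪ ≡)* u, then t (⊸ₘ ∪ ⊸ₑ)* ≡ u, and moreover the number of ⊸ₘ steps and the number of ⊸ₑ steps in the two reduction sequences are exactly the same. -/
/-!
Induct on the mixed sequence. A leading `≡` step in front of a sequence already normalised to
`t (⊸ₘ ∪ ⊸ₑ)* w ≡ u` is pushed through the reduction part one step at a time; strong
bisimulation answers each `⊸ₘ` step by a `⊸ₘ` step and each `⊸ₑ` step by a `⊸ₑ` step, so both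
counts are preserved.
-/

/-- Reduction sequences mixing multiplicative steps, exponential steps and
    structural-equivalence steps, counting the numbers of ⊸ₘ and ⊸ₑ steps. -/
inductive MixedSeq {α : Type*} (Rm Re E : α → α → Prop) : ℕ → ℕ → α → α → Prop
  | refl (a : α) : MixedSeq Rm Re E 0 0 a a
  | mstep {a b c : α} {m e : ℕ} :
      Rm a b → MixedSeq Rm Re E m e b c → MixedSeq Rm Re E (m + 1) e a c
  | estep {a b c : α} {m e : ℕ} :
      Re a b → MixedSeq Rm Re E m e b c → MixedSeq Rm Re E m (e + 1) a c
  | eqstep {a b c : α} {m e : ℕ} :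
      E a b → MixedSeq Rm Re E m e b c → MixedSeq Rm Re E m e a c

/-- Reduction sequences of ⊸ₘ and ⊸ₑ steps only, with counts. -/
inductive RedSeq {α : Type*} (Rm Re : α → α → Prop) : ℕ → ℕ → α → α → Prop
  | refl (a : α) : RedSeq Rm Re 0 0 a a
  | mstep {a b c : α} {m e : ℕ} :
      Rm a b → RedSeq Rm Re m e b c → RedSeq Rm Re (m + 1) e a c
  | estep {a b c : α} {m e : ℕ} :
      Re a b → RedSeq Rm Re m e b c → RedSeq Rm Re m (e + 1) a c

namespace RedSeq

variable {α : Type*} {Rm Re E : α → α → Prop}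

theorem lift_along_simulation
    (hsimM : ∀ t u t', E t u → Rm t t' → ∃ u', Rm u u' ∧ E t' u')
    (hsimE : ∀ t u t', E t u → Re t t' → ∃ u', Re u u' ∧ E t' u')
    {m e : ℕ} {t w u : α} (h : RedSeq Rm Re m e t w) (htu : E t u) :
    ∃ w', RedSeq Rm Re m e u w' ∧ E w w' := by
  induction h generalizing u with
  | refl => exact ⟨u, refl u, htu⟩
  | mstep hstep _ ih =>
    obtain ⟨u', hu, hu'⟩ := hsimM _ _ _ htu hstep
    obtain ⟨w', hw, hw'⟩ := ih hu'
    exact ⟨w', mstep hu hw, hw'⟩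
  | estep hstep _ ih =>
    obtain ⟨u', hu, hu'⟩ := hsimE _ _ _ htu hstep
    obtain ⟨w', hw, hw'⟩ := ih hu'
    exact ⟨w', estep hu hw, hw'⟩

end RedSeq

/-- Postponement of structural equivalence: in any of the four linear
    substitution calculi (whose structural equivalence ≡ is an equivalence and a
    strong bisimulation with respect to ⊸ₘ and ⊸ₑ), if
    `t (⊸ₘ ∪ ⊸ₑ ∪ ≡)* u` then `t (⊸ₘ ∪ ⊸ₑ)* ≡ u` with exactly the same
    numbers of ⊸ₘ and ⊸ₑ steps. -/
theorem structural_equivalence_postponement {α : Type*}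
    (Rm Re E : α → α → Prop)
    (hequiv : Equivalence E)
    (hbisimM : ∀ t u t', E t u → Rm t t' → ∃ u', Rm u u' ∧ E t' u')
    (hbisimE : ∀ t u t', E t u → Re t t' → ∃ u', Re u u' ∧ E t' u') :
    ∀ (m e : ℕ) (t u : α), MixedSeq Rm Re E m e t u →
      ∃ w, RedSeq Rm Re m e t w ∧ E w u := by
  intro m e t u h
  induction h with
  | refl a => exact ⟨a, .refl a, hequiv.refl a⟩
  | mstep hstep _ ih =>
    obtain ⟨w, hw, hwu⟩ := ih
    exact ⟨w, .mstep hstep hw, hwu⟩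
  | estep hstep _ ih =>
    obtain ⟨w, hw, hwu⟩ := ih
    exact ⟨w, .estep hstep hw, hwu⟩
  | eqstep hab _ ih =>
    obtain ⟨w, hw, hwu⟩ := ih
    obtain ⟨w', hw', hww'⟩ := hw.lift_along_simulation hbisimM hbisimE (hequiv.symm hab)
    exact ⟨w', hw', hequiv.trans (hequiv.symm hww') hwu⟩
end

section
/- Abstract Reflection for reflective distilleries: let D be a reflective distillery, s a reachable state, and x ∈ {m, e}. If decode(s) ⊸ₓ u then there exists a state s' such that nf_c(s) →ₓ s' and decode(s') ≡ u, where nf_c(s) is the unique commutative normal form of s. -/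
/-!
Commutative transitions are invisible up to `≡`, so `decode s ≡ decode (nfc s)`. By strong
bisimulation the step of `decode s` transfers to a step of `decode (nfc s)` with the same label;
progress turns it into a machine step from `nfc s`, whose decoding is, by determinism of the
calculus, exactly that transferred step up to `≡`.
-/

section Distillery

variable {σ τ : Type*} {E : τ → τ → Prop} {decode : σ → τ}

theorem reachable_and_decode_equiv_of_reflTransGen {Rc : σ → σ → Prop} {reachable : σ → Prop}
    (hE : Equivalence E)
    (hreach : ∀ s s', reachable s → Rc s s' → reachable s')
    (hdecC : ∀ s s', reachable s → Rc s s' → E (decode s) (decode s'))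
    {s n : σ} (hs : reachable s) (h : Relation.ReflTransGen Rc s n) :
    reachable n ∧ E (decode s) (decode n) := by
  induction h with
  | refl => exact ⟨hs, hE.refl _⟩
  | tail _ hstep ih =>
    exact ⟨hreach _ _ ih.1 hstep, hE.trans ih.2 (hdecC _ _ ih.1 hstep)⟩

theorem exists_step_decode_equiv_of_equiv {R : σ → σ → Prop} {C : τ → τ → Prop}
    (hE : Equivalence E)
    (hdet : ∀ t u₁ u₂, C t u₁ → C t u₂ → u₁ = u₂)
    (hbisim : ∀ t u t', E t u → C t t' → ∃ u', C u u' ∧ E t' u')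
    {n : σ} (hdec : ∀ s', R n s' → ∃ w, C (decode n) w ∧ E w (decode s'))
    (hprog : ∀ t, C (decode n) t → ∃ s', R n s')
    {t u : τ} (htn : E t (decode n)) (hu : C t u) :
    ∃ s', R n s' ∧ E (decode s') u := by
  obtain ⟨u', hnu', huu'⟩ := hbisim _ _ _ htn hu
  obtain ⟨s', hns'⟩ := hprog _ hnu'
  obtain ⟨w, hnw, hws'⟩ := hdec _ hns'
  obtain rfl : w = u' := hdet _ _ _ hnw hnu'
  exact ⟨s', hns', hE.symm (hE.trans huu' hws')⟩

end Distillery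

theorem distillery_reflection_general {σ τ : Type*}
    (Rc Rmm Rme : σ → σ → Prop)            -- machine transitions
    (Cm Ce : τ → τ → Prop)                 -- the calculus
    (E : τ → τ → Prop)                     -- structural equivalence
    (decode : σ → τ)
    (reachable : σ → Prop)
    (nfc : σ → σ)                          -- commutative normal form
    (hreach : ∀ s s', reachable s → (Rc s s' ∨ Rmm s s' ∨ Rme s s') → reachable s')
    -- determinism of the calculus: at most one redex per term
    (hdetCalc : ∀ t u₁ u₂, (Cm t u₁ ∨ Ce t u₁) → (Cm t u₂ ∨ Ce t u₂) → u₁ = u₂)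
    -- structural equivalence is an equivalence and a strong bisimulation
    (hequiv : Equivalence E)
    (hbisimM : ∀ t u t', E t u → Cm t t' → ∃ u', Cm u u' ∧ E t' u')
    (hbisimE : ∀ t u t', E t u → Ce t t' → ∃ u', Ce u u' ∧ E t' u')
    -- distillation conditions on reachable states
    (hdecC : ∀ s s', reachable s → Rc s s' → E (decode s) (decode s'))
    (hdecM : ∀ s s', reachable s → Rmm s s' →
      ∃ w, Cm (decode s) w ∧ E w (decode s'))
    (hdecE : ∀ s s', reachable s → Rme s s' →
      ∃ w, Ce (decode s) w ∧ E w (decode s'))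
    -- Termination: `nfc s` is the commutative normal form of `s`
    (hnfc : ∀ s, reachable s →
      Relation.ReflTransGen Rc s (nfc s) ∧ ∀ s', ¬ Rc (nfc s) s')
    -- Progress
    (hprogM : ∀ s t, reachable s → (∀ s', ¬ Rc s s') → Cm (decode s) t →
      ∃ s', Rmm s s')
    (hprogE : ∀ s t, reachable s → (∀ s', ¬ Rc s s') → Ce (decode s) t →
      ∃ s', Rme s s') :
    ∀ s u, reachable s →
      (Cm (decode s) u → ∃ s', Rmm (nfc s) s' ∧ E (decode s') u) ∧
      (Ce (decode s) u → ∃ s', Rme (nfc s) s' ∧ E (decode s') u) := by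
  intro s u hs
  obtain ⟨hsteps, hnf⟩ := hnfc s hs
  obtain ⟨hrn, hsn⟩ := reachable_and_decode_equiv_of_reflTransGen hequiv
    (fun s s' h hc => hreach s s' h (Or.inl hc)) hdecC hs hsteps
  exact ⟨exists_step_decode_equiv_of_equiv hequiv
      (fun t u₁ u₂ h₁ h₂ => hdetCalc t u₁ u₂ (Or.inl h₁) (Or.inl h₂)) hbisimM
      (hdecM _ · hrn) (hprogM _ · hrn hnf) hsn,
    exists_step_decode_equiv_of_equiv hequiv
      (fun t u₁ u₂ h₁ h₂ => hdetCalc t u₁ u₂ (Or.inr h₁) (Or.inr h₂)) hbisimE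
      (hdecE _ · hrn) (hprogE _ · hrn hnf) hsn⟩

/-- Abstract Reflection for reflective distilleries: every step of the calculus
    on the decoding of a reachable state `s` is reflected by the machine from
    the commutative normal form `nfc s` of `s`. All the ingredients of a
    reflective distillery appear as hypotheses. -/
theorem distillery_reflection {σ τ : Type*}
    (Rc Rmm Rme : σ → σ → Prop)            -- machine transitions
    (Cm Ce : τ → τ → Prop)                 -- the calculus
    (E : τ → τ → Prop)                     -- structural equivalence
    (decode : σ → τ)
    (reachable : σ → Prop)
    (nfc : σ → σ)                          -- commutative normal form
    (hreach : ∀ s s', reachable s → (Rc s s' ∨ Rmm s s' ∨ Rme s s') → reachable s')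
    -- determinism of the machine
    (hdetMach : ∀ s s₁ s₂, (Rc s s₁ ∨ Rmm s s₁ ∨ Rme s s₁) →
      (Rc s s₂ ∨ Rmm s s₂ ∨ Rme s s₂) → s₁ = s₂)
    -- determinism of the calculus: at most one redex per term
    (hdetCalc : ∀ t u₁ u₂, (Cm t u₁ ∨ Ce t u₁) → (Cm t u₂ ∨ Ce t u₂) → u₁ = u₂)
    (hdetLabel : ∀ t u₁ u₂, Cm t u₁ → Ce t u₂ → False)
    -- structural equivalence is an equivalence and a strong bisimulation
    (hequiv : Equivalence E)
    (hbisimM : ∀ t u t', E t u → Cm t t' → ∃ u', Cm u u' ∧ E t' u')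
    (hbisimE : ∀ t u t', E t u → Ce t t' → ∃ u', Ce u u' ∧ E t' u')
    -- distillation conditions on reachable states
    (hdecC : ∀ s s', reachable s → Rc s s' → E (decode s) (decode s'))
    (hdecM : ∀ s s', reachable s → Rmm s s' →
      ∃ w, Cm (decode s) w ∧ E w (decode s'))
    (hdecE : ∀ s s', reachable s → Rme s s' →
      ∃ w, Ce (decode s) w ∧ E w (decode s'))
    -- Termination: `nfc s` is the commutative normal form of `s`
    (hnfc : ∀ s, reachable s →
      Relation.ReflTransGen Rc s (nfc s) ∧ ∀ s', ¬ Rc (nfc s) s')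
    -- Progress
    (hprogM : ∀ s t, reachable s → (∀ s', ¬ Rc s s') → Cm (decode s) t →
      ∃ s', Rmm s s')
    (hprogE : ∀ s t, reachable s → (∀ s', ¬ Rc s s') → Ce (decode s) t →
      ∃ s', Rme s s') :
    ∀ s u, reachable s →
      (Cm (decode s) u → ∃ s', Rmm (nfc s) s' ∧ E (decode s') u) ∧
      (Ce (decode s) u → ∃ s', Rme (nfc s) s' ∧ E (decode s') u) :=
  distillery_reflection_general Rc Rmm Rme Cm Ce E decode reachable nfc hreach hdetCalc hequiv
    hbisimM hbisimE hdecC hdecM hdecE hnfc hprogM hprogE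
end
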